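/- If f : ℂ → E is admissible and has boundary Lipschitz constants (M_0, M_1), then for every positive integer n and every z ∈ S one has ‖f_n(z)‖_E ≤ e^{1/n} max(M_0, M_1). -/

import Mathlib

open Complex Set Filter Asymptotics

/-!
The shift `z ↦ z - i/n` preserves the strip and `z ↦ i n e^{z²/n}` is entire, so `f_n` is again
admissible; moreover `|e^{z²/n}| = e^{(x² - y²)/n} ≤ e^{1/n}` on `S`. On the line `Re z = j` the
Lipschitz bound gives `‖f(z - i/n) - f(z)‖ ≤ M_j / n`, hence `‖f_n(z)‖ ≤ e^{1/n} M_j` there, and the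
Phragmén–Lindelöf principle for bounded functions on a strip carries this bound to all of `S`.
-/

theorem norm_sub_le_of_lipschitz_on_vertical_line {E : Type*} [SeminormedAddCommGroup E]
    {f : ℂ → E} {a M : ℝ} (hL : ∀ s t : ℝ, ‖f (a + t * I) - f (a + s * I)‖ ≤ M * |t - s|)
    {w : ℂ} (hw : w.re = a) (h : ℝ) : ‖f (w - h * I) - f w‖ ≤ M * |h| := by
  obtain ⟨t, rfl⟩ : ∃ t : ℝ, w = a + t * I := ⟨w.im, by rw [← hw, re_add_im]⟩
  have hshift : (a : ℂ) + t * I - h * I = a + (t - h : ℝ) * I := by push_cast; ring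
  simpa only [hshift, sub_sub_cancel_left, abs_neg] using hL t (t - h)

theorem norm_exp_sq_div_le {w : ℂ} (hw : |w.re| ≤ 1) {r : ℝ} (hr : 0 ≤ r) :
    ‖exp (w ^ 2 / r)‖ ≤ Real.exp (1 / r) := by
  rw [norm_exp, Real.exp_le_exp, div_ofReal_re]
  gcongr
  rw [sq, mul_re, ← sq, ← sq]
  nlinarith [sq_nonneg w.im, sq_abs w.re, abs_nonneg w.re]

section

variable {E : Type*} [NormedAddCommGroup E] [NormedSpace ℂ E]

theorem norm_le_of_vertical_strip_of_bounded {g : ℂ → E} {a b B C : ℝ} {z : ℂ}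
    (hd : DiffContOnCl ℂ g (re ⁻¹' Ioo a b)) (hB : ∀ w ∈ re ⁻¹' Ioo a b, ‖g w‖ ≤ B)
    (ha : ∀ w : ℂ, w.re = a → ‖g w‖ ≤ C) (hb : ∀ w : ℂ, w.re = b → ‖g w‖ ≤ C)
    (hz : z.re ∈ Icc a b) : ‖g z‖ ≤ C := by
  refine PhragmenLindelof.vertical_strip hd
    ⟨Real.pi / (b - a) - 1, by linarith, 0, ?_⟩ ha hb hz.1 hz.2
  refine IsBigO.of_bound B ?_
  filter_upwards [mem_inf_of_right (mem_principal_self _)] with w hw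
  simpa using hB w hw

/-- The function `f_n` of the paper. -/
noncomputable def dampedDiffQuotient (f : ℂ → E) (n : ℕ) (z : ℂ) : E :=
  (I * n * exp (z ^ 2 / n)) • (f (z - I / n) - f z)

theorem DiffContOnCl.dampedDiffQuotient {f : ℂ → E} {a b : ℝ}
    (hf : DiffContOnCl ℂ f (re ⁻¹' Ioo a b)) (n : ℕ) :
    DiffContOnCl ℂ (dampedDiffQuotient f n) (re ⁻¹' Ioo a b) := by
  have hshift : MapsTo (· - I / n) (re ⁻¹' Ioo a b) (re ⁻¹' Ioo a b) := fun w hw => by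
    simpa [div_re] using hw
  refine (Differentiable.diffContOnCl (by fun_prop)).smul
    ((hf.comp (differentiable_id.sub_const _).diffContOnCl hshift).sub hf)

theorem norm_dampedDiffQuotient_le (f : ℂ → E) (n : ℕ) {w : ℂ} (hw : |w.re| ≤ 1) :
    ‖dampedDiffQuotient f n w‖ ≤ Real.exp (1 / n) * (n * ‖f (w - I / n) - f w‖) := by
  have hexp := norm_exp_sq_div_le hw n.cast_nonneg
  rw [ofReal_natCast] at hexp
  rw [dampedDiffQuotient, norm_smul, norm_mul, norm_mul, norm_I, one_mul, norm_natCast]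
  calc (n : ℝ) * ‖exp (w ^ 2 / n)‖ * ‖f (w - I / n) - f w‖
      ≤ n * Real.exp (1 / n) * ‖f (w - I / n) - f w‖ := by gcongr
    _ = _ := by ring

theorem norm_dampedDiffQuotient_le_of_lipschitz_on_vertical_line {f : ℂ → E} {a M : ℝ}
    (hL : ∀ s t : ℝ, ‖f (a + t * I) - f (a + s * I)‖ ≤ M * |t - s|) {n : ℕ} (hn : 0 < n)
    {w : ℂ} (hw : w.re = a) (ha : |a| ≤ 1) :
    ‖dampedDiffQuotient f n w‖ ≤ Real.exp (1 / n) * M := by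
  have hshift : I / n = (n : ℝ)⁻¹ * I := by push_cast; ring
  have hdiff := norm_sub_le_of_lipschitz_on_vertical_line hL hw (n : ℝ)⁻¹
  rw [← hshift, abs_inv, Nat.abs_cast] at hdiff
  refine (norm_dampedDiffQuotient_le f n (hw ▸ ha)).trans ?_
  gcongr
  calc (n : ℝ) * ‖f (w - I / n) - f w‖ ≤ n * (M * (n : ℝ)⁻¹) := by gcongr
    _ = M := by field_simp

end

theorem fn_strip_max_bound_general
    {E : Type*} [NormedAddCommGroup E] [NormedSpace ℂ E]
    (f : ℂ → E)
    (hBdd : ∃ C : ℝ, ∀ z ∈ {z : ℂ | 0 ≤ z.re ∧ z.re ≤ 1}, ‖f z‖ ≤ C)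
    (hCont : ContinuousOn f {z : ℂ | 0 ≤ z.re ∧ z.re ≤ 1})
    (hAnal : DifferentiableOn ℂ f {z : ℂ | 0 < z.re ∧ z.re < 1})
    (M₀ M₁ : ℝ)
    (hL₀ : ∀ s t : ℝ, ‖f (t * Complex.I) - f (s * Complex.I)‖ ≤ M₀ * |t - s|)
    (hL₁ : ∀ s t : ℝ,
      ‖f (1 + t * Complex.I) - f (1 + s * Complex.I)‖ ≤ M₁ * |t - s|)
    (n : ℕ) (hn : 0 < n) (z : ℂ) (hz : 0 ≤ z.re ∧ z.re ≤ 1) :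
    ‖(Complex.I * n * Complex.exp (z ^ 2 / n)) •
        (f (z - Complex.I / n) - f z)‖ ≤ Real.exp (1 / n) * max M₀ M₁ := by
  obtain ⟨C, hC⟩ := hBdd
  have hf : DiffContOnCl ℂ f (re ⁻¹' Ioo 0 1) :=
    ⟨hAnal, hCont.mono (closure_minimal (preimage_mono Ioo_subset_Icc_self)
      (isClosed_Icc.preimage continuous_re))⟩
  have hL₀' : ∀ s t : ℝ, ‖f ((0 : ℝ) + t * I) - f ((0 : ℝ) + s * I)‖ ≤ M₀ * |t - s| := by
    simpa only [ofReal_zero, zero_add] using hL₀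
  have hL₁' : ∀ s t : ℝ, ‖f ((1 : ℝ) + t * I) - f ((1 : ℝ) + s * I)‖ ≤ M₁ * |t - s| := by
    simpa only [ofReal_one] using hL₁
  refine norm_le_of_vertical_strip_of_bounded (g := dampedDiffQuotient f n)
    (hf.dampedDiffQuotient n) (B := Real.exp (1 / n) * (n * (C + C)))
    (fun w hw => ?_) (fun w hw => ?_) (fun w hw => ?_) hz
  · have hwS : w.re ∈ Icc 0 1 := Ioo_subset_Icc_self hw
    refine (norm_dampedDiffQuotient_le f n (abs_le.2 ⟨by linarith [hwS.1], hwS.2⟩)).trans ?_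
    gcongr
    exact (norm_sub_le _ _).trans (add_le_add (hC _ (by simpa [div_re] using hwS)) (hC _ hwS))
  · exact (norm_dampedDiffQuotient_le_of_lipschitz_on_vertical_line hL₀' hn hw
      (by norm_num)).trans (by gcongr; exact le_max_left _ _)
  · exact (norm_dampedDiffQuotient_le_of_lipschitz_on_vertical_line hL₁' hn hw
      (by norm_num)).trans (by gcongr; exact le_max_right _ _)

/-- If `f : ℂ → E` is admissible and has boundary Lipschitz constants
`(M₀, M₁)`, then for every positive integer `n` and every `z` in the closed strip `S`,
`‖f_n(z)‖ ≤ e^{1/n} max(M₀, M₁)`, where `f_n(z) = i n e^{z²/n} (f(z − i/n) − f(z))`. -/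
theorem fn_strip_max_bound
    {E : Type*} [NormedAddCommGroup E] [NormedSpace ℂ E] [CompleteSpace E]
    (f : ℂ → E)
    (hBdd : ∃ C : ℝ, ∀ z ∈ {z : ℂ | 0 ≤ z.re ∧ z.re ≤ 1}, ‖f z‖ ≤ C)
    (hCont : ContinuousOn f {z : ℂ | 0 ≤ z.re ∧ z.re ≤ 1})
    (hAnal : DifferentiableOn ℂ f {z : ℂ | 0 < z.re ∧ z.re < 1})
    (M₀ M₁ : ℝ) (hM₀ : 0 ≤ M₀) (hM₁ : 0 ≤ M₁)
    (hL₀ : ∀ s t : ℝ, ‖f (t * Complex.I) - f (s * Complex.I)‖ ≤ M₀ * |t - s|)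
    (hL₁ : ∀ s t : ℝ,
      ‖f (1 + t * Complex.I) - f (1 + s * Complex.I)‖ ≤ M₁ * |t - s|)
    (n : ℕ) (hn : 0 < n) (z : ℂ) (hz : 0 ≤ z.re ∧ z.re ≤ 1) :
    ‖(Complex.I * n * Complex.exp (z ^ 2 / n)) •
        (f (z - Complex.I / n) - f z)‖ ≤ Real.exp (1 / n) * max M₀ M₁ :=
  fn_strip_max_bound_general f hBdd hCont hAnal M₀ M₁ hL₀ hL₁ n hn z hz
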